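/- Let (X,d) be a metric space, T : X → X satisfying P(Tx,Ty,Tz) < P(x,y,z) for all pairwise distinct x,y,z, and suppose T has no point of prime period 2. If the Picard orbit xₙ = Tⁿx₀ satisfies xₙ ≠ Txₙ for all n, then the sequence Pₙ := P(xₙ, xₙ₊₁, xₙ₊₂) is strictly decreasing, and consequently all terms xₙ of the orbit are pairwise distinct. -/

import Mathlib

/-! The triangle perimeter `F y := P(y, T y, T² y)` strictly decreases along `T` at every `y`
for which `y` and `T y` are not fixed: the three points are pairwise distinct (`y = T² y` would
make `y` a point of prime period 2), so the perimeter contraction applies. Hence `Pₙ = F xₙ` is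
strictly decreasing, and a repetition `x_m = x_n` would force `P_m = P_n`. -/

section

variable {X : Type*} [MetricSpace X]

def perimeter (a b c : X) : ℝ := dist a b + dist b c + dist a c

def orbitPerimeter (T : X → X) (y : X) : ℝ := perimeter y (T y) (T (T y))

theorem orbitPerimeter_apply_lt {T : X → X}
    (h : ∀ x y z : X, x ≠ y → y ≠ z → x ≠ z →
      perimeter (T x) (T y) (T z) < perimeter x y z)
    (hper : ∀ x : X, T (T x) = x → T x = x) {y : X} (hy : T y ≠ y) (hTy : T (T y) ≠ T y) :
    orbitPerimeter T (T y) < orbitPerimeter T y :=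
  h y (T y) (T (T y)) hy.symm hTy.symm fun hyy => hy (hper y hyy.symm)

end

theorem stmt_11 {X : Type*} [MetricSpace X] (T : X → X)
    (h : ∀ x y z : X, x ≠ y → y ≠ z → x ≠ z →
      dist (T x) (T y) + dist (T y) (T z) + dist (T x) (T z) <
        dist x y + dist y z + dist x z)
    (hper : ∀ x : X, T (T x) = x → T x = x)
    (x : ℕ → X) (hx : ∀ n, x (n + 1) = T (x n))
    (hnf : ∀ n, x n ≠ T (x n)) :
    StrictAnti (fun n => dist (x n) (x (n+1)) + dist (x (n+1)) (x (n+2)) +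
      dist (x n) (x (n+2))) ∧
    ∀ m n : ℕ, m ≠ n → x m ≠ x n := by
  have hP : (fun n => dist (x n) (x (n+1)) + dist (x (n+1)) (x (n+2)) +
      dist (x n) (x (n+2))) = orbitPerimeter T ∘ x := by
    funext n
    simp only [Function.comp, orbitPerimeter, perimeter, hx]
  have hanti : StrictAnti (orbitPerimeter T ∘ x) := strictAnti_nat_of_succ_lt fun n => by
    have hTx : T (T (x n)) ≠ T (x n) := by simpa only [hx] using (hnf (n + 1)).symm
    simpa only [Function.comp, hx] using
      orbitPerimeter_apply_lt h hper (hnf n).symm hTx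
  exact ⟨hP ▸ hanti, fun m n hmn => hanti.injective.of_comp.ne hmn⟩
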